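/- arXiv:1304.5288 — 3 statements merged into one kernel-verified Lean document; each statement's English description precedes it below -/
import Mathlib

section
/- Let C be a nodal curve and Z, Z' tails of C. If #(Term_Z ∩ Term_{Z'}) = k_Z − 1, then the pair (Z, Z') is perfect, i.e., one of the inclusions Z ⊆ Z', Z' ⊆ Z, Z^c ⊆ Z', Z' ⊆ Z^c holds. -/
open Finset

/-- A combinatorial model of a nodal curve: `V` is the set of irreducible
components, `N` the set of nodes, `ends e` the (one or two) components through
the node `e`, `gen v` the geometric genus of the component `v`, and `base` the
component containing the marked smooth point `σ(0)`. -/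
structure NodalGraph where
  V : Type
  N : Type
  [fV : Fintype V]
  [dV : DecidableEq V]
  [fN : Fintype N]
  [dN : DecidableEq N]
  ends : N → V × V
  gen : V → ℕ
  base : V

attribute [instance] NodalGraph.fV NodalGraph.dV NodalGraph.fN NodalGraph.dN

namespace NodalGraph

variable (G : NodalGraph)

/-- Two components are adjacent if some node lies on both. -/
def Adj (a b : G.V) : Prop := ∃ e, G.ends e = (a, b) ∨ G.ends e = (b, a)

/-- The set of terminal points of a subcurve `Z`, i.e. the nodes in `Z ∩ Zᶜ`. -/
def Term (Z : Finset G.V) : Finset G.N :=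
  univ.filter (fun e =>
    ((G.ends e).1 ∈ Z ∧ (G.ends e).2 ∉ Z) ∨ ((G.ends e).1 ∉ Z ∧ (G.ends e).2 ∈ Z))

/-- `k_Z`, the number of terminal points of `Z`. -/
def k (Z : Finset G.V) : ℕ := (G.Term Z).card

/-- A (nonempty) subcurve is connected. -/
def ConnSub (Z : Finset G.V) : Prop :=
  Z.Nonempty ∧ ∀ u ∈ Z, ∀ v ∈ Z,
    Relation.ReflTransGen (fun a b => a ∈ Z ∧ b ∈ Z ∧ G.Adj a b) u v

/-- The whole curve is connected. -/
def Connected : Prop := G.ConnSub univ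

/-- A tail: a proper subcurve `Z` with both `Z` and `Zᶜ` connected. -/
def IsTail (Z : Finset G.V) : Prop := Z ≠ univ ∧ G.ConnSub Z ∧ G.ConnSub Zᶜ

/-- A `m`-tail: a tail with `k_Z = m`. -/
def IsKTail (Z : Finset G.V) (m : ℕ) : Prop := G.IsTail Z ∧ G.k Z = m

/-- The node `e` lies on the component `v`. -/
def onComp (e : G.N) (v : G.V) : Prop := (G.ends e).1 = v ∨ (G.ends e).2 = v

/-- The node `e`, as a point of the curve, lies on the subcurve `Z`. -/
def nodeOn (e : G.N) (Z : Finset G.V) : Prop := (G.ends e).1 ∈ Z ∨ (G.ends e).2 ∈ Z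

/-- The subcurve `Z` crosses the node `e`: both branches of `e` lie in `Z`. -/
def crosses (Z : Finset G.V) (e : G.N) : Prop := (G.ends e).1 ∈ Z ∧ (G.ends e).2 ∈ Z

/-- `Z ≺ Z'`: strict inclusion with disjoint terminal points. -/
def prec (Z Z' : Finset G.V) : Prop := Z ⊂ Z' ∧ G.Term Z ∩ G.Term Z' = ∅

/-- The pair `(Z, Z')` is free: disjoint terminal points. -/
def free (Z Z' : Finset G.V) : Prop := G.Term Z ∩ G.Term Z' = ∅

/-- The pair `(Z, Z')` is perfect. -/
def perfect (Z Z' : Finset G.V) : Prop := Z ⊆ Z' ∨ Z' ⊆ Z ∨ Zᶜ ⊆ Z' ∨ Z' ⊆ Zᶜ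

/-- `T¹_γ`: the nested set of 1-tails containing `C_γ` and avoiding `σ(0)`. -/
def T1 (γ : G.V) : Set (Finset G.V) := { Z | G.IsKTail Z 1 ∧ γ ∈ Z ∧ G.base ∉ Z }

/-- The defining condition for the 2-tails entering `T²_{γ,γ'}`. -/
def cond2 (γ γ' : G.V) (Z : Finset G.V) : Prop :=
  G.IsKTail Z 2 ∧ γ ∈ Z ∧ γ' ∈ Z ∧ G.base ∉ Z

/-- `W 0 ≺ W 1 ≺ ⋯ ≺ W (M-1)` is the nested set `T²_{γ,γ'}` of 2-tails:
each `W t` is minimal among the 2-tails `Z ⊇ C_γ ∪ C_γ'` with `σ(0) ∈ Zᶜ`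
and `W (t-1) ≺ Z` (starting from `W_{-1} = ∅`), and the chain is maximal. -/
def IsNested2 (γ γ' : G.V) (M : ℕ) (W : ℕ → Finset G.V) : Prop :=
  (∀ t < M, Minimal (fun Z => G.cond2 γ γ' Z ∧ G.prec (if t = 0 then ∅ else W (t - 1)) Z) (W t)) ∧
  ¬ ∃ Z, G.cond2 γ γ' Z ∧ G.prec (if M = 0 then ∅ else W (M - 1)) Z

/-- The set underlying a finite chain `W 0, …, W (M-1)`. -/
def chainSet (M : ℕ) (W : ℕ → Finset G.V) : Set (Finset G.V) := { Z | ∃ t < M, W t = Z }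

/-- The defining condition for the 3-tails entering `T³_{γ,γ'}`:
3-tails that are moreover free with respect to every member of `T²_{γ,γ'}`. -/
def cond3 (γ γ' : G.V) (T2 : Set (Finset G.V)) (Z : Finset G.V) : Prop :=
  G.IsKTail Z 3 ∧ γ ∈ Z ∧ γ' ∈ Z ∧ G.base ∉ Z ∧ ∀ W ∈ T2, G.free Z W

/-- `W 0 ≺ ⋯ ≺ W (M-1)` is the nested set `T³_{γ,γ'}` of 3-tails (relative to
the set `T2` of nested 2-tails). -/
def IsNested3 (γ γ' : G.V) (T2 : Set (Finset G.V)) (M : ℕ) (W : ℕ → Finset G.V) : Prop :=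
  (∀ t < M, Minimal (fun Z => G.cond3 γ γ' T2 Z ∧ G.prec (if t = 0 then ∅ else W (t - 1)) Z) (W t)) ∧
  ¬ ∃ Z, G.cond3 γ γ' T2 Z ∧ G.prec (if M = 0 then ∅ else W (M - 1)) Z

end NodalGraph

/-!
If the pair is not perfect, then `Z'` meets both `Z` and `Zᶜ`, and so does `Z'ᶜ`. A path inside
the connected subcurve `Z'` from `Z` to `Zᶜ` leaves `Z` through a node of `Term_Z` with both
branches in `Z'`, hence not in `Term_{Z'}`; a path inside `Z'ᶜ` gives a second such node, with
both branches in `Z'ᶜ`. So `Term_Z \ Term_{Z'}` has at least two elements, i.e.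
`#(Term_Z ∩ Term_{Z'}) ≤ k_Z - 2`.
-/

namespace NodalGraph

variable {G : NodalGraph}

lemma exists_mem_term_crosses_of_reflTransGen {S Z : Finset G.V} {u v : G.V}
    (huv : Relation.ReflTransGen (fun a b => a ∈ S ∧ b ∈ S ∧ G.Adj a b) u v)
    (hu : u ∈ Z) (hv : v ∉ Z) : ∃ e ∈ G.Term Z, G.crosses S e := by
  induction huv with
  | refl => exact absurd hu hv
  | @tail b c _ hbc ih =>
    by_cases hb : b ∈ Z
    · obtain ⟨hbS, hcS, e, he | he⟩ := hbc <;>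
        exact ⟨e, by simp [Term, he, hb, hv], by simp [crosses, he, hbS, hcS]⟩
    · exact ih hb

lemma ConnSub.exists_mem_term_crosses {S Z : Finset G.V} (hS : G.ConnSub S) {u v : G.V}
    (huS : u ∈ S) (hvS : v ∈ S) (hu : u ∈ Z) (hv : v ∉ Z) : ∃ e ∈ G.Term Z, G.crosses S e :=
  exists_mem_term_crosses_of_reflTransGen (hS.2 u huS v hvS) hu hv

lemma term_compl (S : Finset G.V) : G.Term Sᶜ = G.Term S := by
  ext e
  simp only [Term, mem_filter, mem_univ, true_and, mem_compl, not_not]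
  tauto

lemma notMem_term_of_crosses {S : Finset G.V} {e : G.N} (he : G.crosses S e) :
    e ∉ G.Term S := by
  simp [Term, he.1, he.2]

lemma notMem_term_of_crosses_compl {S : Finset G.V} {e : G.N} (he : G.crosses Sᶜ e) :
    e ∉ G.Term S :=
  term_compl S ▸ notMem_term_of_crosses he

lemma one_lt_card_term_sdiff_of_not_perfect {Z Z' : Finset G.V}
    (hZ' : G.ConnSub Z') (hZ'c : G.ConnSub Z'ᶜ) (hperf : ¬ G.perfect Z Z') :
    1 < #(G.Term Z \ G.Term Z') := by
  simp only [perfect, not_or, not_subset, mem_compl, not_not] at hperf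
  obtain ⟨⟨b, hbZ, hbZ'⟩, ⟨c, hcZ', hcZ⟩, ⟨d, hdZ, hdZ'⟩, ⟨a, haZ', haZ⟩⟩ := hperf
  obtain ⟨e₁, he₁Z, he₁⟩ := hZ'.exists_mem_term_crosses haZ' hcZ' haZ hcZ
  obtain ⟨e₂, he₂Z, he₂⟩ :=
    hZ'c.exists_mem_term_crosses (mem_compl.2 hbZ') (mem_compl.2 hdZ') hbZ hdZ
  refine one_lt_card.2 ⟨e₁, mem_sdiff.2 ⟨he₁Z, notMem_term_of_crosses he₁⟩,
    e₂, mem_sdiff.2 ⟨he₂Z, notMem_term_of_crosses_compl he₂⟩, ?_⟩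
  rintro rfl
  exact mem_compl.1 he₂.1 he₁.1

end NodalGraph

theorem perfect_of_card_term_inter_general
    (G : NodalGraph) (Z Z' : Finset G.V)
    (hZ' : G.IsTail Z')
    (h : (G.Term Z ∩ G.Term Z').card = G.k Z - 1) :
    G.perfect Z Z' := by
  by_contra hperf
  have hsdiff := NodalGraph.one_lt_card_term_sdiff_of_not_perfect hZ'.2.1 hZ'.2.2 hperf
  have hsplit := card_inter_add_card_sdiff (G.Term Z) (G.Term Z')
  unfold NodalGraph.k at h
  omega

/-- Lemma 2.7(ii): if `#(Term_Z ∩ Term_{Z'}) = k_Z − 1` for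
tails `Z, Z'`, then the pair `(Z, Z')` is perfect. -/
theorem perfect_of_card_term_inter
    (G : NodalGraph) (hconn : G.Connected) (Z Z' : Finset G.V)
    (hZ : G.IsTail Z) (hZ' : G.IsTail Z')
    (h : (G.Term Z ∩ G.Term Z').card = G.k Z - 1) :
    G.perfect Z Z' :=
  perfect_of_card_term_inter_general G Z Z' hZ' h
end

section
/- Let C be a nodal curve with a marked smooth point σ(0) and fix an irreducible component C_γ. Let T^1_γ be the set of 1-tails Z of C with C_γ ⊆ Z and σ(0) ∈ Z^c. Then T^1_γ is totally ordered under the relation W ≺ W' (meaning W ⊊ W' and Term_W ∩ Term_{W'} = ∅): for any W, W' in T^1_γ with W ≠ W', either W ≺ W' or W' ≺ W. -/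
open Finset

namespace NodalGraph

variable {G : NodalGraph}

lemma Term_compl (Z : Finset G.V) : G.Term Zᶜ = G.Term Z := by
  ext e
  simp only [Term, mem_filter, mem_univ, true_and, mem_compl]
  tauto

lemma notMem_Term_of_crosses {Z : Finset G.V} {e : G.N} (h : G.crosses Z e) :
    e ∉ G.Term Z := by
  simp only [crosses] at h
  simp only [Term, mem_filter, mem_univ, true_and]
  tauto

lemma exists_mem_Term_crosses_of_reflTransGen {Z A : Finset G.V} {u v : G.V}
    (h : Relation.ReflTransGen (fun a b => a ∈ Z ∧ b ∈ Z ∧ G.Adj a b) u v)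
    (hu : u ∈ A) (hv : v ∉ A) : ∃ e ∈ G.Term A, G.crosses Z e := by
  induction h with
  | refl => exact absurd hu hv
  | @tail b c _ step ih =>
    by_cases hb : b ∈ A
    · obtain ⟨hbZ, hcZ, e, he | he⟩ := step <;>
        exact ⟨e, by simp [Term, he, hb, hv], by simp [crosses, he, hbZ, hcZ]⟩
    · exact ih hb

lemma exists_mem_Term_crosses_of_connSub {Z A : Finset G.V} (hZ : G.ConnSub Z) {u v : G.V}
    (huZ : u ∈ Z) (hvZ : v ∈ Z) (hu : u ∈ A) (hv : v ∉ A) :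
    ∃ e ∈ G.Term A, G.crosses Z e :=
  exists_mem_Term_crosses_of_reflTransGen (hZ.2 u huZ v hvZ) hu hv

lemma subset_or_subset_of_k_le_one {W W' : Finset G.V} {γ b : G.V} (hk : G.k W ≤ 1)
    (hW' : G.ConnSub W') (hW'c : G.ConnSub W'ᶜ) (hγW : γ ∈ W) (hγW' : γ ∈ W')
    (hbW : b ∉ W) (hbW' : b ∉ W') : W ⊆ W' ∨ W' ⊆ W := by
  by_contra! h
  obtain ⟨x, hxW, hxW'⟩ := not_subset.mp h.1
  obtain ⟨y, hyW', hyW⟩ := not_subset.mp h.2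
  -- The unique terminal point of `W` would lie both on `W'` and on `W'ᶜ`.
  obtain ⟨e₁, he₁, he₁W'⟩ := exists_mem_Term_crosses_of_connSub hW' hγW' hyW' hγW hyW
  obtain ⟨e₂, he₂, he₂W'c⟩ :=
    exists_mem_Term_crosses_of_connSub hW'c (mem_compl.mpr hxW') (mem_compl.mpr hbW') hxW hbW
  have : e₁ = e₂ := card_le_one.mp hk e₁ he₁ e₂ he₂
  subst this
  exact mem_compl.mp he₂W'c.1 he₁W'.1

lemma prec_of_ssubset {W W' : Finset G.V} {b : G.V} (hss : W ⊂ W') (hWc : G.ConnSub Wᶜ)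
    (hk : G.k W' ≤ 1) (hbW' : b ∉ W') : G.prec W W' := by
  refine ⟨hss, eq_empty_iff_forall_notMem.mpr fun f hf => ?_⟩
  obtain ⟨v, hvW', hvW⟩ := exists_of_ssubset hss
  -- `Wᶜ` joins `v ∈ W'` to `b ∉ W'`, so it crosses the unique terminal point of `W'`.
  obtain ⟨e, he, heWc⟩ := exists_mem_Term_crosses_of_connSub hWc (mem_compl.mpr hvW)
    (mem_compl.mpr fun hbW => hbW' (hss.subset hbW)) hvW' hbW'
  have : f = e := card_le_one.mp hk f (mem_inter.mp hf).2 e he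
  subst this
  exact notMem_Term_of_crosses heWc (Term_compl W ▸ (mem_inter.mp hf).1)

end NodalGraph

theorem T1_totally_ordered_general
    (G : NodalGraph) (γ : G.V) (W W' : Finset G.V)
    (hW : W ∈ G.T1 γ) (hW' : W' ∈ G.T1 γ) (hne : W ≠ W') :
    G.prec W W' ∨ G.prec W' W := by
  obtain ⟨⟨⟨-, -, hWc⟩, hWk⟩, hγW, hbW⟩ := hW
  obtain ⟨⟨⟨-, hW'conn, hW'c⟩, hW'k⟩, hγW', hbW'⟩ := hW'
  rcases NodalGraph.subset_or_subset_of_k_le_one hWk.le hW'conn hW'c hγW hγW' hbW hbW'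
    with h | h
  · exact Or.inl (NodalGraph.prec_of_ssubset (h.ssubset_of_ne hne) hWc hW'k.le hbW')
  · exact Or.inr (NodalGraph.prec_of_ssubset (h.ssubset_of_ne hne.symm) hW'c hWk.le hbW)

/-- [7, Lemma 4.3]: the set `T¹_γ` of 1-tails containing `C_γ`
and avoiding `σ(0)` is totally ordered by `≺`. -/
theorem T1_totally_ordered
    (G : NodalGraph) (hconn : G.Connected) (γ : G.V) (W W' : Finset G.V)
    (hW : W ∈ G.T1 γ) (hW' : W' ∈ G.T1 γ) (hne : W ≠ W') :
    G.prec W W' ∨ G.prec W' W :=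
  T1_totally_ordered_general G γ W W' hW hW' hne
end

section
/- Let C be a nodal curve with marked smooth point σ(0), and fix irreducible components C_γ, C_{γ'}. If Z is a 2-tail of C with C_γ ∪ C_{γ'} ⊆ Z and σ(0) ∈ Z^c, then there exists a 2-tail W in the nested set T²_{γ,γ'} such that W ⊆ Z and Term_W ∩ Term_Z ≠ ∅ (W is Z-terminal). -/
open Finset

/-!
Let `W t` be the first member of the chain with `W t ⊀ Z`; it exists because `Z` would
otherwise extend the maximal chain. Both `W t` and `Z` are admissible after `W (t - 1)`, and
so is their wedge: if neither contains the other, each has exactly one terminal node inside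
the other, `W t ∩ Z` has exactly these two terminal nodes, it is connected because all of its
pieces would have to leave `W t` through the same node inside `Z`, and its complement is the
union of two connected subcurves through `σ(0)`. Minimality of `W t` forces `W t ⊆ Z`, and
then `W t ⊀ Z` says that their terminal points meet.
-/

namespace NodalGraph

variable {G : NodalGraph}

lemma Adj.symm {a b : G.V} (h : G.Adj a b) : G.Adj b a :=
  let ⟨e, he⟩ := h; ⟨e, he.symm⟩

abbrev AdjIn (S : Finset G.V) (a b : G.V) : Prop := a ∈ S ∧ b ∈ S ∧ G.Adj a b

instance (S : Finset G.V) : Std.Symm (G.AdjIn S) :=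
  ⟨fun _ _ h => ⟨h.2.1, h.1, h.2.2.symm⟩⟩

lemma mem_of_reflTransGen_adjIn {S : Finset G.V} {u x : G.V}
    (h : Relation.ReflTransGen (G.AdjIn S) u x) (hu : u ∈ S) : x ∈ S := by
  induction h with
  | refl => exact hu
  | tail _ hstep _ => exact hstep.2.1

lemma connSub_of_forall_reach {S : Finset G.V} {w : G.V} (hw : w ∈ S)
    (h : ∀ u ∈ S, Relation.ReflTransGen (G.AdjIn S) u w) : G.ConnSub S :=
  ⟨⟨w, hw⟩, fun u hu v hv => (h u hu).trans (Std.Symm.symm _ _ (h v hv))⟩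

lemma ConnSub.union {S T : Finset G.V} {x : G.V} (hS : G.ConnSub S) (hT : G.ConnSub T)
    (hx : x ∈ S ∩ T) : G.ConnSub (S ∪ T) := by
  obtain ⟨hxS, hxT⟩ := mem_inter.1 hx
  refine connSub_of_forall_reach (mem_union_left _ hxS) fun u hu => ?_
  have mono {A : Finset G.V} (hA : A ⊆ S ∪ T) : G.AdjIn A ≤ G.AdjIn (S ∪ T) :=
    fun _ _ h => ⟨hA h.1, hA h.2.1, h.2.2⟩
  rcases mem_union.1 hu with hu | hu
  · exact Relation.ReflTransGen.mono (mono subset_union_left) _ _ (hS.2 u hu x hxS)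
  · exact Relation.ReflTransGen.mono (mono subset_union_right) _ _ (hT.2 u hu x hxT)

lemma ConnSub.exists_adj {S : Finset G.V} (hS : G.ConnSub S) (P : G.V → Prop) {u v : G.V}
    (hu : u ∈ S) (hv : v ∈ S) (hPu : P u) (hPv : ¬ P v) :
    ∃ a ∈ S, ∃ b ∈ S, P a ∧ ¬ P b ∧ G.Adj a b := by
  induction hS.2 u hu v hv with
  | refl => exact absurd hPu hPv
  | @tail b c _ hbc ih =>
    by_cases hPb : P b
    · exact ⟨b, hbc.1, c, hbc.2.1, hPb, hPv, hbc.2.2⟩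
    · exact ih hbc.1 hPb

@[simp] lemma mem_Term {Z : Finset G.V} {e : G.N} :
    e ∈ G.Term Z ↔
      ((G.ends e).1 ∈ Z ∧ (G.ends e).2 ∉ Z) ∨ ((G.ends e).1 ∉ Z ∧ (G.ends e).2 ∈ Z) := by
  simp [Term]

lemma Term_empty : G.Term ∅ = ∅ := by
  ext; simp

lemma Term_inter_subset (A B : Finset G.V) : G.Term (A ∩ B) ⊆ G.Term A ∪ G.Term B := by
  intro e
  simp only [mem_Term, mem_union, mem_inter]
  tauto

lemma mem_Term_of_ends {Z : Finset G.V} {e : G.N} {a b : G.V}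
    (he : G.ends e = (a, b) ∨ G.ends e = (b, a)) (ha : a ∈ Z) (hb : b ∉ Z) : e ∈ G.Term Z := by
  rcases he with he | he <;> simp [he, ha, hb]

lemma onComp_of_ends {e : G.N} {a b : G.V} (he : G.ends e = (a, b) ∨ G.ends e = (b, a)) :
    G.onComp e a := by
  rcases he with he | he <;> simp [onComp, he]

lemma crosses_of_ends {S : Finset G.V} {e : G.N} {a b : G.V}
    (he : G.ends e = (a, b) ∨ G.ends e = (b, a)) (ha : a ∈ S) (hb : b ∈ S) : G.crosses S e := by
  rcases he with he | he <;> simp [crosses, he, ha, hb]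

lemma crosses.mono {S T : Finset G.V} {e : G.N} (hST : S ⊆ T) (h : G.crosses S e) :
    G.crosses T e :=
  ⟨hST h.1, hST h.2⟩

lemma crosses.not_crosses_compl {S : Finset G.V} {e : G.N} (h : G.crosses S e) :
    ¬ G.crosses Sᶜ e :=
  fun h' => mem_compl.1 h'.1 h.1

lemma crosses.notMem_Term {S : Finset G.V} {e : G.N} (h : G.crosses S e) : e ∉ G.Term S := by
  simp [h.1, h.2]

lemma crosses.notMem_Term_of_compl {S : Finset G.V} {e : G.N} (h : G.crosses Sᶜ e) :
    e ∉ G.Term S := by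
  simp [mem_compl.1 h.1, mem_compl.1 h.2]

lemma mem_Term_inter_of_crosses {A B : Finset G.V} {e : G.N} (he : e ∈ G.Term A)
    (hB : G.crosses B e) : e ∈ G.Term (A ∩ B) := by
  obtain ⟨h₁, h₂⟩ := hB
  simp only [mem_Term, mem_inter] at he ⊢
  tauto

lemma eq_of_onComp_of_mem_Term {Z : Finset G.V} {e : G.N} {x y : G.V} (he : e ∈ G.Term Z)
    (hx : G.onComp e x) (hy : G.onComp e y) (hxZ : x ∈ Z) (hyZ : y ∈ Z) : x = y := by
  unfold onComp at hx hy
  rw [mem_Term] at he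
  rcases hx with rfl | rfl <;> rcases hy with rfl | rfl <;> tauto

lemma ConnSub.exists_mem_Term_crosses {S Z : Finset G.V} {u v : G.V} (hS : G.ConnSub S)
    (hu : u ∈ S) (hv : v ∈ S) (huZ : u ∈ Z) (hvZ : v ∉ Z) :
    ∃ e ∈ G.Term Z, G.crosses S e := by
  obtain ⟨a, ha, b, hb, haZ, hbZ, e, he⟩ := hS.exists_adj (· ∈ Z) hu hv huZ hvZ
  exact ⟨e, mem_Term_of_ends he haZ hbZ, crosses_of_ends he ha hb⟩

lemma ConnSub.inter_of_crosses_unique {S Z : Finset G.V} (hS : G.ConnSub S)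
    (hne : (Z ∩ S).Nonempty)
    (huniq : ∀ e ∈ G.Term Z, ∀ e' ∈ G.Term Z, G.crosses S e → G.crosses S e' → e = e') :
    G.ConnSub (Z ∩ S) := by
  by_cases hSZ : S ⊆ Z
  · rwa [inter_eq_right.2 hSZ]
  obtain ⟨y, hyS, hyZ⟩ := not_subset.1 hSZ
  -- Leaving its component inside `Z ∩ S` along a path in `S` towards `y`, each `u` meets a
  -- terminal node of `Z` crossed by `S`; by uniqueness it is always the same one.
  have exit : ∀ u ∈ Z ∩ S, ∃ x ∈ Z, ∃ e ∈ G.Term Z,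
      G.crosses S e ∧ G.onComp e x ∧ Relation.ReflTransGen (G.AdjIn (Z ∩ S)) u x := by
    intro u hu
    obtain ⟨x, hxS, z, hzS, hux, huz, e, he⟩ :=
      hS.exists_adj (Relation.ReflTransGen (G.AdjIn (Z ∩ S)) u) (mem_inter.1 hu).2 hyS .refl
        fun h => hyZ (mem_inter.1 (mem_of_reflTransGen_adjIn h hu)).1
    have hxZS := mem_of_reflTransGen_adjIn hux hu
    have hzZ : z ∉ Z := fun hz => huz (hux.tail ⟨hxZS, mem_inter.2 ⟨hz, hzS⟩, e, he⟩)
    exact ⟨x, (mem_inter.1 hxZS).1, e, mem_Term_of_ends he (mem_inter.1 hxZS).1 hzZ,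
      crosses_of_ends he hxS hzS, onComp_of_ends he, hux⟩
  obtain ⟨w, hw⟩ := hne
  refine connSub_of_forall_reach hw fun u hu => ?_
  obtain ⟨x, hxZ, e, he, heS, hex, hux⟩ := exit u hu
  obtain ⟨x', hx'Z, e', he', he'S, hex', hwx'⟩ := exit w hw
  obtain rfl := huniq e he e' he' heS he'S
  obtain rfl := eq_of_onComp_of_mem_Term he hex hex' hxZ hx'Z
  exact hux.trans (Std.Symm.symm _ _ hwx')

lemma IsKTail.Term_nonempty {Z : Finset G.V} {m : ℕ} (h : G.IsKTail Z m) (hm : m ≠ 0) :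
    (G.Term Z).Nonempty :=
  card_pos.1 (by rw [show (G.Term Z).card = m from h.2]; omega)

lemma exists_Term_eq_pair_crosses {Z₁ Z₂ : Finset G.V} {γ c b₀ b : G.V} (hk : G.k Z₁ = 2)
    (hc : G.ConnSub Z₂) (hcc : G.ConnSub Z₂ᶜ) (hγ : γ ∈ Z₁ ∩ Z₂) (hc₀ : c ∈ Z₂ \ Z₁)
    (hb₀ : b₀ ∈ Z₁ \ Z₂) (hb : b ∉ Z₁ ∪ Z₂) :
    ∃ e₁ e₂, G.Term Z₁ = {e₁, e₂} ∧ G.crosses Z₂ e₁ ∧ G.crosses Z₂ᶜ e₂ := by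
  rw [mem_inter] at hγ
  rw [mem_sdiff] at hc₀ hb₀
  rw [mem_union, not_or] at hb
  obtain ⟨e₁, he₁, hc₁⟩ := hc.exists_mem_Term_crosses hγ.2 hc₀.1 hγ.1 hc₀.2
  obtain ⟨e₂, he₂, hc₂⟩ :=
    hcc.exists_mem_Term_crosses (mem_compl.2 hb₀.2) (mem_compl.2 hb.2) hb₀.1 hb.1
  have hne : e₁ ≠ e₂ := by
    rintro rfl
    exact hc₁.not_crosses_compl hc₂
  refine ⟨e₁, e₂, (eq_of_subset_of_card_le ?_ ?_).symm, hc₁, hc₂⟩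
  · exact insert_subset he₁ (singleton_subset_iff.2 he₂)
  · rw [card_pair hne]
    exact hk.le

lemma Term_inter_eq_pair {Z₁ Z₂ : Finset G.V} {e₁ e₂ f₁ f₂ : G.N}
    (hT₁ : G.Term Z₁ = {e₁, e₂}) (he₁ : G.crosses Z₂ e₁) (he₂ : G.crosses Z₂ᶜ e₂)
    (hT₂ : G.Term Z₂ = {f₁, f₂}) (hf₁ : G.crosses Z₁ f₁) (hf₂ : G.crosses Z₁ᶜ f₂) :
    G.Term (Z₁ ∩ Z₂) = {e₁, f₁} := by
  apply Subset.antisymm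
  · intro g hg
    have hge₂ : g ≠ e₂ := by
      rintro rfl
      exact (he₂.mono (compl_subset_compl.2 inter_subset_right)).notMem_Term_of_compl hg
    have hgf₂ : g ≠ f₂ := by
      rintro rfl
      exact (hf₂.mono (compl_subset_compl.2 inter_subset_left)).notMem_Term_of_compl hg
    have hg₁₂ := Term_inter_subset Z₁ Z₂ hg
    rw [hT₁, hT₂] at hg₁₂
    simp only [mem_union, mem_insert, mem_singleton] at hg₁₂ ⊢
    tauto
  · rw [insert_subset_iff, singleton_subset_iff]
    exact ⟨mem_Term_inter_of_crosses (hT₁ ▸ mem_insert_self _ _) he₁,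
      inter_comm Z₂ Z₁ ▸ mem_Term_inter_of_crosses (hT₂ ▸ mem_insert_self _ _) hf₁⟩

theorem IsKTail.inter_of_not_subset {Z₁ Z₂ : Finset G.V} {γ b : G.V} (h₁ : G.IsKTail Z₁ 2)
    (h₂ : G.IsKTail Z₂ 2) (h₁₂ : ¬ Z₁ ⊆ Z₂) (h₂₁ : ¬ Z₂ ⊆ Z₁) (hγ : γ ∈ Z₁ ∩ Z₂)
    (hb : b ∉ Z₁ ∪ Z₂) : G.IsKTail (Z₁ ∩ Z₂) 2 := by
  obtain ⟨b₀, hb₀⟩ := sdiff_nonempty.2 h₁₂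
  obtain ⟨c, hc⟩ := sdiff_nonempty.2 h₂₁
  obtain ⟨e₁, e₂, hT₁, he₁, he₂⟩ :=
    exists_Term_eq_pair_crosses h₁.2 h₂.1.2.1 h₂.1.2.2 hγ hc hb₀ hb
  obtain ⟨f₁, f₂, hT₂, hf₁, hf₂⟩ := exists_Term_eq_pair_crosses h₂.2 h₁.1.2.1 h₁.1.2.2
    (inter_comm Z₁ Z₂ ▸ hγ) hb₀ hc (union_comm Z₁ Z₂ ▸ hb)
  have hne : e₁ ≠ f₁ := by
    rintro rfl
    exact he₁.notMem_Term (hT₂ ▸ mem_insert_self _ _)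
  have hcrossing : ∀ e ∈ G.Term Z₁, G.crosses Z₂ e → e = e₁ := by
    intro e he hcr
    rw [hT₁, mem_insert, mem_singleton] at he
    rcases he with rfl | rfl
    · rfl
    · exact absurd he₂ hcr.not_crosses_compl
  have hbc : b ∈ Z₁ᶜ ∩ Z₂ᶜ := by simpa [not_or] using hb
  refine ⟨⟨fun h => hb (mem_union_left _ (inter_subset_left (h ▸ mem_univ b))), ?_, ?_⟩, ?_⟩
  · exact h₂.1.2.1.inter_of_crosses_unique ⟨γ, hγ⟩ fun e he e' he' hcr hcr' =>
      (hcrossing e he hcr).trans (hcrossing e' he' hcr').symm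
  · rw [compl_inter]
    exact h₁.1.2.2.union h₂.1.2.2 hbc
  · rw [k, Term_inter_eq_pair hT₁ he₁ he₂ hT₂ hf₁ hf₂, card_pair hne]

lemma prec.inter {P Z₁ Z₂ : Finset G.V} (h₁ : G.prec P Z₁) (h₂ : G.prec P Z₂)
    (hT : (G.Term (Z₁ ∩ Z₂)).Nonempty) : G.prec P (Z₁ ∩ Z₂) := by
  have hdisj : G.Term P ∩ G.Term (Z₁ ∩ Z₂) = ∅ := subset_empty.1 <|
    calc G.Term P ∩ G.Term (Z₁ ∩ Z₂) ⊆ G.Term P ∩ (G.Term Z₁ ∪ G.Term Z₂) :=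
          inter_subset_inter_left (Term_inter_subset _ _)
      _ = ∅ := by rw [inter_union_distrib_left, h₁.2, h₂.2, union_empty]
  refine ⟨Finset.ssubset_iff_subset_ne.2 ⟨subset_inter h₁.1.subset h₂.1.subset, fun h => ?_⟩, hdisj⟩
  rw [h, inter_self] at hdisj
  exact hT.ne_empty hdisj

lemma exists_cond2_prec_subset_inter {γ γ' : G.V} {P Z₁ Z₂ : Finset G.V}
    (h₁ : G.cond2 γ γ' Z₁) (h₂ : G.cond2 γ γ' Z₂) (hp₁ : G.prec P Z₁) (hp₂ : G.prec P Z₂) :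
    ∃ Y, (G.cond2 γ γ' Y ∧ G.prec P Y) ∧ Y ⊆ Z₁ ∩ Z₂ := by
  by_cases h₁₂ : Z₁ ⊆ Z₂
  · exact ⟨Z₁, ⟨h₁, hp₁⟩, subset_inter Subset.rfl h₁₂⟩
  by_cases h₂₁ : Z₂ ⊆ Z₁
  · exact ⟨Z₂, ⟨h₂, hp₂⟩, subset_inter h₂₁ Subset.rfl⟩
  obtain ⟨hZ₁, hγ₁, hγ'₁, hb₁⟩ := h₁
  obtain ⟨hZ₂, hγ₂, hγ'₂, hb₂⟩ := h₂
  have hY := hZ₁.inter_of_not_subset hZ₂ h₁₂ h₂₁ (b := G.base)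
    (mem_inter.2 ⟨hγ₁, hγ₂⟩) (by simp [hb₁, hb₂])
  exact ⟨Z₁ ∩ Z₂, ⟨⟨hY, mem_inter.2 ⟨hγ₁, hγ₂⟩, mem_inter.2 ⟨hγ'₁, hγ'₂⟩,
    fun h => hb₁ (mem_inter.1 h).1⟩, hp₁.inter hp₂ (hY.Term_nonempty two_ne_zero)⟩, Subset.rfl⟩

lemma prec_empty {Z : Finset G.V} (hZ : Z.Nonempty) : G.prec ∅ Z :=
  ⟨empty_ssubset.2 hZ, by rw [Term_empty, empty_inter]⟩

lemma Term_inter_nonempty_of_not_prec {Y Z : Finset G.V} (hYZ : Y ⊆ Z) (hprec : ¬ G.prec Y Z)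
    (hZ : (G.Term Z).Nonempty) : (G.Term Y ∩ G.Term Z).Nonempty := by
  by_cases h : Y = Z
  · rwa [h, inter_self]
  · exact nonempty_iff_ne_empty.2 fun h' => hprec ⟨Finset.ssubset_iff_subset_ne.2 ⟨hYZ, h⟩, h'⟩

end NodalGraph

lemma Nat.exists_lt_and_not_succ {p : ℕ → Prop} {n : ℕ} (h0 : p 0) (hn : ¬ p n) :
    ∃ t < n, p t ∧ ¬ p (t + 1) := by
  induction n with
  | zero => exact absurd h0 hn
  | succ n ih =>
    by_cases hp : p n
    · exact ⟨n, n.lt_succ_self, hp, hn⟩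
    · obtain ⟨t, ht, h⟩ := ih hp
      exact ⟨t, ht.trans n.lt_succ_self, h⟩

open NodalGraph

theorem exists_Zterminal_two_tail_general
    (G : NodalGraph) (γ γ' : G.V)
    (M : ℕ) (W : ℕ → Finset G.V) (hN : G.IsNested2 γ γ' M W)
    (Z : Finset G.V) (hZ : G.IsKTail Z 2) (hγ : γ ∈ Z) (hγ' : γ' ∈ Z)
    (hb : G.base ∈ Zᶜ) :
    ∃ t < M, W t ⊆ Z ∧ (G.Term (W t) ∩ G.Term Z).Nonempty := by
  have hZ₂ : G.cond2 γ γ' Z := ⟨hZ, hγ, hγ', mem_compl.1 hb⟩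
  -- `t` is the first index with `W t ⊀ Z`; it exists since the chain cannot be extended by `Z`.
  obtain ⟨t, htM, hprev, hnot⟩ :=
    Nat.exists_lt_and_not_succ (p := fun t => G.prec (if t = 0 then ∅ else W (t - 1)) Z)
      (by simpa using prec_empty ⟨γ, hγ⟩) fun h => hN.2 ⟨Z, hZ₂, h⟩
  simp only [Nat.add_eq_zero_iff, one_ne_zero, and_false, if_false,
    Nat.add_sub_cancel] at hnot
  have hmin := hN.1 t htM
  obtain ⟨Y, hY, hYsub⟩ := exists_cond2_prec_subset_inter hmin.prop.1 hZ₂ hmin.prop.2 hprev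
  have hWZ : W t ⊆ Z :=
    (hmin.2 hY (hYsub.trans inter_subset_left)).trans (hYsub.trans inter_subset_right)
  exact ⟨t, htM, hWZ, Term_inter_nonempty_of_not_prec hWZ hnot (hZ.Term_nonempty two_ne_zero)⟩

/-- Lemma 2.5: every 2-tail `Z ⊇ C_γ ∪ C_{γ'}` with
`σ(0) ∈ Zᶜ` contains a `Z`-terminal member of `T²_{γ,γ'}`. -/
theorem exists_Zterminal_two_tail
    (G : NodalGraph) (hconn : G.Connected) (γ γ' : G.V)
    (M : ℕ) (W : ℕ → Finset G.V) (hN : G.IsNested2 γ γ' M W)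
    (Z : Finset G.V) (hZ : G.IsKTail Z 2) (hγ : γ ∈ Z) (hγ' : γ' ∈ Z)
    (hb : G.base ∈ Zᶜ) :
    ∃ t < M, W t ⊆ Z ∧ (G.Term (W t) ∩ G.Term Z).Nonempty :=
  exists_Zterminal_two_tail_general G γ γ' M W hN Z hZ hγ hγ' hb
end
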